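/- arXiv:1112.3874 — 2 statements merged into one kernel-verified Lean document; each statement's English description precedes it below -/
import Mathlib

section
/- G_{f₀} is topologically transitive on (𝒳,d): for any nonempty open sets U, V ⊆ 𝒳 there exists k ∈ ℕ with G_{f₀}^k(U) ∩ V ≠ ∅. -/
open scoped BigOperators
open MeasureTheory ProbabilityTheory

namespace CI

/-- Strategies: sequences with values in {1,…,N}, encoded as `Fin N`. -/
abbrev Strat (N : ℕ) := ℕ → Fin N
/-- States of the system: boolean vectors of length N. -/
abbrev CState (N : ℕ) := Fin N → Bool
/-- The phase space 𝒳 = {1,…,N}^ℕ × 𝔹^N. -/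
abbrev Pt (N : ℕ) := Strat N × CState N

/-- d_e : sum of the discrete metric over the coordinates. -/
noncomputable def de {N : ℕ} (E F : CState N) : ℝ :=
  ∑ k : Fin N, if E k = F k then (0 : ℝ) else 1

/-- d_s(S,Š) = (9/N) Σ_{k≥1} |S^k − Š^k| / 10^k  (indices shifted to start at 0). -/
noncomputable def ds (N : ℕ) (S T : Strat N) : ℝ :=
  (9 / N) * ∑' k : ℕ, |((S k : ℝ)) - ((T k : ℝ))| / 10 ^ (k + 1)

/-- The distance d = d_e + d_s on 𝒳. -/
noncomputable def dC {N : ℕ} (p q : Pt N) : ℝ := de p.2 q.2 + ds N p.1 q.1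

/-- Flip bit k of the state E. -/
def bflip {N : ℕ} (k : Fin N) (E : CState N) : CState N :=
  fun j => if j = k then !(E j) else E j

/-- F_f(k,E): equal to E except possibly in coordinate k, where it is f(E)_k. -/
def Ff {N : ℕ} (f : CState N → CState N) (k : Fin N) (E : CState N) : CState N :=
  fun j => if j = k then f E k else E j

/-- The chaotic-iterations map G_f(S,E) = (σ(S), F_f(S^0,E)). -/
def Gf {N : ℕ} (f : CState N → CState N) (p : Pt N) : Pt N :=
  (fun n => p.1 (n + 1), Ff f (p.1 0) p.2)

/-- The vectorial negation f₀. -/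
def f0 {N : ℕ} (E : CState N) : CState N := fun j => !(E j)

/-- G_{f₀}. -/
def G0 {N : ℕ} : Pt N → Pt N := Gf f0

/-- Open ball for the distance dC. -/
def ballC {N : ℕ} (x : Pt N) (r : ℝ) : Set (Pt N) := {y | dC x y < r}

/-- Open sets of the metric space (𝒳,d). -/
def IsOpenC {N : ℕ} (U : Set (Pt N)) : Prop := ∀ x ∈ U, ∃ ε > 0, ballC x ε ⊆ U

/-- Iterating the flip-one-coordinate dynamics along a strategy. -/
def runCI {N : ℕ} (S : ℕ → Fin N) (E : CState N) : ℕ → CState N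
  | 0 => E
  | n + 1 => bflip (S n) (runCI S E n)

/-- The CIDS (cover-dependent) strategy: S^k = k if k ≤ N and X_k = 1, else S^k = 1
(indices encoded from 0, so "1" is `0 : Fin N`). -/
def cids {N : ℕ} [NeZero N] (X : CState N) : ℕ → Fin N :=
  fun k => if h : k < N then (if X ⟨k, h⟩ then ⟨k, h⟩ else 0) else 0

/-! Under `G0` each step flips the coordinate `S 0` and shifts the strategy, so a finite word
listing the coordinates where two states differ steers any state onto any other, after which
the strategy may continue as any prescribed tail. A point of `U` keeps its first `n` strategy
terms and hence, by the `10⁻ⁿ` tail bound on `ds`, stays in `U`; appending such a steering word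
and the strategy of a point of `V` sends it exactly onto that point. -/

variable {N : ℕ}

theorem Ff_f0 (k : Fin N) : Ff f0 k = bflip k := by
  funext E j
  by_cases h : j = k
  · subst h; simp [Ff, bflip, f0]
  · simp [Ff, bflip, h]

theorem G0_cons (a : Fin N) (S : Strat N) (E : CState N) :
    G0 (Stream'.cons a S, E) = (S, bflip a E) := by
  rw [G0, Gf, Ff_f0]
  rfl

theorem exists_iterate_G0_eq_of_subset (T : Strat N) (F : CState N) (l : List (Fin N)) :
    ∀ E : CState N, (∀ j, E j ≠ F j → j ∈ l) → ∃ S k, G0^[k] (S, E) = (T, F) := by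
  induction l with
  | nil =>
    intro E hEF
    have hEF : E = F := funext fun j => not_not.mp fun h => by simpa using hEF j h
    exact ⟨T, 0, by rw [hEF]; rfl⟩
  | cons a l ih =>
    intro E hEF
    by_cases ha : E a = F a
    · refine ih E fun j hj => (List.mem_cons.mp (hEF j hj)).resolve_left ?_
      rintro rfl
      exact hj ha
    · obtain ⟨S, k, hk⟩ := ih (bflip a E) fun j hj => by
        by_cases hja : j = a
        · subst hja
          cases hE : E j <;> cases hF : F j <;> simp_all [bflip]
        · exact (List.mem_cons.mp (hEF j (by simpa [bflip, hja] using hj))).resolve_left hja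
      exact ⟨Stream'.cons a S, k + 1, by rw [Function.iterate_succ_apply, G0_cons, hk]⟩

theorem exists_iterate_G0_eq (T : Strat N) (E F : CState N) :
    ∃ S k, G0^[k] (S, E) = (T, F) :=
  exists_iterate_G0_eq_of_subset T F (List.finRange N) E fun j _ => List.mem_finRange j

theorem exists_prefix_iterate_G0_eq (T : Strat N) (F : CState N) (n : ℕ) :
    ∀ (S : Strat N) (E : CState N),
      ∃ S' k, (∀ i < n, S' i = S i) ∧ G0^[k] (S', E) = (T, F) := by
  induction n with
  | zero =>
    intro S E
    obtain ⟨S', k, hk⟩ := exists_iterate_G0_eq T E F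
    exact ⟨S', k, fun i hi => absurd hi i.not_lt_zero, hk⟩
  | succ n ih =>
    intro S E
    obtain ⟨S', k, hS', hk⟩ := ih (fun i => S (i + 1)) (bflip (S 0) E)
    refine ⟨Stream'.cons (S 0) S', k + 1, fun i hi => ?_, ?_⟩
    · rcases i with _ | i
      exacts [rfl, hS' i (by omega)]
    · rw [Function.iterate_succ_apply, G0_cons, hk]

theorem de_self (E : CState N) : de E E = 0 := by simp [de]

theorem ds_self (S : Strat N) : ds N S S = 0 := by simp [ds]

theorem dC_self (p : Pt N) : dC p p = 0 := by simp [dC, de_self, ds_self]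

theorem abs_sub_div_pow_le (a b : Fin N) (k : ℕ) :
    |(a : ℝ) - b| / 10 ^ k ≤ N * (1 / 10) ^ k := by
  have hab : |(a : ℝ) - b| ≤ N :=
    (abs_sub_lt_of_nonneg_of_lt (Nat.cast_nonneg _) (by exact_mod_cast a.isLt)
      (Nat.cast_nonneg _) (by exact_mod_cast b.isLt)).le
  rw [one_div_pow, mul_one_div]
  gcongr

theorem ds_le_of_forall_lt_eq {S T : Strat N} {n : ℕ} (h : ∀ i < n, S i = T i) :
    ds N S T ≤ (1 / 10) ^ n := by
  have hN : (0 : ℝ) < N := by exact_mod_cast (S 0).pos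
  set f : ℕ → ℝ := fun k => |(S k : ℝ) - T k| / 10 ^ (k + 1) with hf
  have hgeom : Summable fun k : ℕ => (1 / 10 : ℝ) ^ k :=
    summable_geometric_of_lt_one (by norm_num) (by norm_num)
  have hsum : Summable f :=
    .of_nonneg_of_le (fun _ => by positivity) (fun k => abs_sub_div_pow_le _ _ _)
      ((hgeom.mul_left ((N : ℝ) / 10)).congr fun k => by ring)
  have htail : ∑' k, f k = ∑' k, f (k + n) := by
    rw [← hsum.sum_add_tsum_nat_add n, Finset.sum_eq_zero, zero_add]
    intro i hi
    simp [hf, h i (Finset.mem_range.mp hi)]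
  have hbound : ∑' k, f (k + n) ≤ ∑' k : ℕ, N * (1 / 10) ^ (n + 1) * (1 / 10 : ℝ) ^ k :=
    Summable.tsum_le_tsum (fun k => (abs_sub_div_pow_le _ _ _).trans_eq (by ring))
      ((summable_nat_add_iff n).mpr hsum) (hgeom.mul_left _)
  calc ds N S T = 9 / N * ∑' k, f (k + n) := by rw [ds, htail]
    _ ≤ 9 / N * ∑' k : ℕ, N * (1 / 10) ^ (n + 1) * (1 / 10 : ℝ) ^ k := by gcongr
    _ = (1 / 10) ^ n := by
      rw [tsum_mul_left, tsum_geometric_of_lt_one (by norm_num) (by norm_num)]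
      field_simp
      ring

theorem stmt10_general {N : ℕ} :
    ∀ U V : Set (Pt N), IsOpenC U → IsOpenC V → U.Nonempty → V.Nonempty →
      ∃ k : ℕ, ((G0^[k] '' U) ∩ V).Nonempty := by
  rintro U V hU hV ⟨⟨S, E⟩, hSE⟩ ⟨⟨T, F⟩, hTF⟩
  obtain ⟨ε, hε, hballU⟩ := hU _ hSE
  obtain ⟨δ, hδ, hballV⟩ := hV _ hTF
  obtain ⟨n, hn⟩ := exists_pow_lt_of_lt_one hε (by norm_num : (1 / 10 : ℝ) < 1)
  obtain ⟨S', k, hS', hk⟩ := exists_prefix_iterate_G0_eq T F n S E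
  refine ⟨k, (T, F), ⟨(S', E), hballU ?_, hk⟩, hballV ?_⟩
  · show de E E + ds N S S' < ε
    rw [de_self, zero_add]
    exact (ds_le_of_forall_lt_eq fun i hi => (hS' i hi).symm).trans_lt hn
  · show dC (T, F) (T, F) < δ
    rwa [dC_self]

theorem stmt10 {N : ℕ} [NeZero N] :
    ∀ U V : Set (Pt N), IsOpenC U → IsOpenC V → U.Nonempty → V.Nonempty →
      ∃ k : ℕ, ((G0^[k] '' U) ∩ V).Nonempty :=
  stmt10_general

end CI
end

section
/- The set of periodic points of G_{f₀} is dense in (𝒳,d), i.e., G_{f₀} is regular. -/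
open scoped BigOperators
open MeasureTheory ProbabilityTheory

namespace CI

lemma G0_iterate {N : ℕ} (p : ℕ) (T : Strat N) (F : CState N) :
    G0^[p] (T, F) = (fun k => T (k + p), runCI T F p) := by
  induction p with
  | zero => simp [runCI]
  | succ p ih =>
    rw [Function.iterate_succ_apply', ih]
    refine Prod.ext ?_ ?_
    · funext k
      show T (k + 1 + p) = T (k + (p + 1))
      ring_nf
    · show Ff f0 (T (0 + p)) (runCI T F p) = runCI T F (p + 1)
      funext j
      show (if j = T (0 + p) then f0 (runCI T F p) (T (0 + p)) else runCI T F p j)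
        = bflip (T p) (runCI T F p) j
      rw [Nat.zero_add]
      unfold bflip f0
      by_cases h : j = T p <;> simp [h]

lemma runCI_xor {N : ℕ} (S : Strat N) (F : CState N) (n : ℕ) (j : Fin N) :
    runCI S F n j = xor (F j) (runCI S (fun _ => false) n j) := by
  induction n with
  | zero => simp [runCI]
  | succ n ih =>
    show bflip (S n) _ j = xor (F j) (bflip (S n) _ j)
    unfold bflip
    by_cases h : j = S n
    · subst h; simp [ih, Bool.xor_not]
    · simp [h, ih]

lemma runCI_twice {N : ℕ} (S : Strat N) (E : CState N) (n : ℕ) :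
    runCI S (runCI S E n) n = E := by
  funext j
  rw [runCI_xor, runCI_xor S E]
  cases E j <;> cases runCI S (fun _ => false) n j <;> rfl

lemma runCI_add {N : ℕ} (T : Strat N) (F : CState N) (a b : ℕ) :
    runCI T F (a + b) = runCI (fun k => T (a + k)) (runCI T F a) b := by
  induction b with
  | zero => rfl
  | succ b ih =>
    show bflip (T (a + b)) (runCI T F (a + b)) = bflip (T (a + b)) _
    rw [ih]

lemma runCI_congr {N : ℕ} (S T : Strat N) (F : CState N) (n : ℕ)
    (h : ∀ k < n, S k = T k) :
    runCI S F n = runCI T F n := by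
  induction n with
  | zero => rfl
  | succ n ih =>
    show bflip (S n) (runCI S F n) = bflip (T n) (runCI T F n)
    rw [h n (Nat.lt_succ_self n), ih (fun k hk => h k (Nat.lt_succ_of_lt hk))]

lemma periodic_point {N : ℕ} (S : Strat N) (E : CState N) (m : ℕ) :
    G0^[2 * m] ((fun k => S (k % m)), E) = ((fun k => S (k % m)), E) := by
  rw [G0_iterate]
  refine Prod.ext ?_ ?_
  · funext k
    show S ((k + 2 * m) % m) = S (k % m)
    rw [Nat.add_mul_mod_self_right]
  · show runCI (fun k => S (k % m)) E (2 * m) = E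
    rw [two_mul, runCI_add]
    have h1 : runCI (fun k => S (k % m)) E m = runCI S E m := by
      apply runCI_congr
      intro k hk
      simp [Nat.mod_eq_of_lt hk]
    have h2 : runCI (fun k => (fun j => S (j % m)) (m + k)) (runCI S E m) m
        = runCI S (runCI S E m) m := by
      apply runCI_congr
      intro k hk
      show S ((m + k) % m) = S k
      rw [Nat.add_comm, Nat.add_mod_right, Nat.mod_eq_of_lt hk]
    rw [h1, h2, runCI_twice]

theorem stmt12 {N : ℕ} [NeZero N] :
    ∀ x : Pt N, ∀ ε > (0 : ℝ), ∃ y : Pt N,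
      (∃ p : ℕ, 1 ≤ p ∧ G0^[p] y = y) ∧ dC x y < ε := by
  rintro ⟨S, E⟩ ε hε
  have hN : (0 : ℝ) < N := by
    exact_mod_cast Nat.pos_of_ne_zero (NeZero.ne N)
  obtain ⟨n, hn⟩ : ∃ n : ℕ, (1 / 10 : ℝ) ^ n < ε :=
    exists_pow_lt_of_lt_one hε (by norm_num)
  set m := n + 1 with hm
  set T : Strat N := fun k => S (k % m) with hT
  refine ⟨(T, E), ⟨2 * m, by omega, periodic_point S E m⟩, ?_⟩
  have hde : de E E = 0 := by simp [de]
  have key : ds N S T < ε := by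
    set a : ℕ → ℝ := fun k => |((S k : ℝ)) - ((T k : ℝ))| / 10 ^ (k + 1) with ha
    have ha0 : ∀ k, 0 ≤ a k := fun k => by positivity
    have hale : ∀ k, a k ≤ (N : ℝ) * (1 / 10) ^ (k + 1) := by
      intro k
      have h1 : |((S k : ℝ)) - ((T k : ℝ))| ≤ N := by
        rw [abs_sub_le_iff]
        have hS : ((S k : ℕ) : ℝ) < N := by exact_mod_cast (S k).is_lt
        have hT' : ((T k : ℕ) : ℝ) < N := by exact_mod_cast (T k).is_lt
        have hS0 : (0 : ℝ) ≤ ((S k : ℕ) : ℝ) := by positivity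
        have hT0 : (0 : ℝ) ≤ ((T k : ℕ) : ℝ) := by positivity
        constructor <;> linarith
      have h10 : (0:ℝ) < 10 ^ (k+1) := by positivity
      rw [ha]
      show |((S k : ℝ)) - ((T k : ℝ))| / 10 ^ (k + 1) ≤ (N : ℝ) * (1 / 10) ^ (k + 1)
      rw [div_pow, one_pow, mul_one_div]
      gcongr
    have hb' : Summable (fun k : ℕ => (N:ℝ) * (1/10) ^ (k + m + 1)) := by
      have e : (fun k : ℕ => (N:ℝ) * (1/10) ^ (k + m + 1))
          = fun k => ((N:ℝ) * (1/10) ^ (m + 1)) * (1/10) ^ k := by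
        funext k; ring
      rw [e]
      exact (summable_geometric_of_lt_one (by norm_num) (by norm_num)).mul_left _
    have hb : Summable (fun k : ℕ => (N:ℝ) * (1/10) ^ (k + 1)) := by
      have e : (fun k : ℕ => (N:ℝ) * (1/10) ^ (k + 1))
          = fun k => ((N:ℝ) * (1/10)) * (1/10) ^ k := by
        funext k; ring
      rw [e]
      exact (summable_geometric_of_lt_one (by norm_num) (by norm_num)).mul_left _
    have hsummable : Summable a := Summable.of_nonneg_of_le ha0 hale hb
    have hzero : ∀ k, k < m → a k = 0 := by
      intro k hk
      have : T k = S k := by simp [hT, Nat.mod_eq_of_lt hk]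
      simp [ha, this]
    have step1 : (∑' k, a k) = ∑' k, a (k + m) := by
      rw [← Summable.sum_add_tsum_nat_add m hsummable]
      rw [Finset.sum_eq_zero (fun k hk => hzero k (Finset.mem_range.mp hk)), zero_add]
    have step2 : (∑' k, a (k + m)) ≤ ∑' k, (N:ℝ) * (1/10) ^ (k + m + 1) :=
      Summable.tsum_le_tsum (fun k => hale (k + m)) ((summable_nat_add_iff m).2 hsummable) hb'
    have step3 : (∑' k, (N:ℝ) * (1/10) ^ (k + m + 1))
        = ((N:ℝ) * (1/10) ^ (m + 1)) * (1 - 1/10 : ℝ)⁻¹ := by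
      have e : (fun k : ℕ => (N:ℝ) * (1/10) ^ (k + m + 1))
          = fun k => ((N:ℝ) * (1/10) ^ (m + 1)) * (1/10) ^ k := by
        funext k; ring
      rw [e, tsum_mul_left, tsum_geometric_of_lt_one (by norm_num) (by norm_num)]
    have hds : ds N S T ≤ (9 / N) * (((N:ℝ) * (1/10) ^ (m + 1)) * (1 - 1/10 : ℝ)⁻¹) := by
      rw [ds]
      apply mul_le_mul_of_nonneg_left _ (by positivity)
      calc (∑' k, a k) = ∑' k, a (k + m) := step1
        _ ≤ ∑' k, (N:ℝ) * (1/10) ^ (k + m + 1) := step2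
        _ = ((N:ℝ) * (1/10) ^ (m + 1)) * (1 - 1/10 : ℝ)⁻¹ := step3
    have hval : (9 / N) * (((N:ℝ) * (1/10) ^ (m + 1)) * (1 - 1/10 : ℝ)⁻¹)
        = (1/10 : ℝ) ^ m := by
      rw [pow_succ]
      field_simp
      ring
    have hmn : (1/10 : ℝ) ^ m ≤ (1/10 : ℝ) ^ n :=
      pow_le_pow_of_le_one (by norm_num) (by norm_num) (by omega)
    calc ds N S T ≤ (1/10 : ℝ) ^ m := hval ▸ hds
      _ ≤ (1/10 : ℝ) ^ n := hmn
      _ < ε := hn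
  show de E E + ds N S T < ε
  rw [hde, zero_add]
  exact key


end CI
end
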